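/- Let a, b > 0 with a < b and let (x_m) be a real sequence with x_m = m/√b + c + O(1/m). Fix ε > 0. Then for all sufficiently large A, there exist m, n ≥ A such that |y_n - x_m| ≤ 1/(2√b) + ε, where (y_n) is any real sequence with y_n = n/√a + c' + O(1/n). In other words, inf{|y_n - x_m| : m, n ≥ A} ≤ 1/(2√b) + ε. -/

import Mathlib

/-!
Both sequences tend to `+∞`, and the consecutive gaps `x (m + 1) - x m = 1/√b + O(1/m)` are
eventually at most `1/√b + 2ε`. A sequence tending to `+∞` with gaps at most `2δ` from index `A`
on comes within `δ` of every point above `x A`; take for that point a term `y n ≥ x A`.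
-/

open Filter

theorem exists_abs_sub_le_of_sub_le_two_mul {u : ℕ → ℝ} (hu : Tendsto u atTop atTop) {A : ℕ}
    {t δ : ℝ} (hAt : u A ≤ t) (hgap : ∀ m, A ≤ m → u (m + 1) - u m ≤ 2 * δ) :
    ∃ m, A ≤ m ∧ |t - u m| ≤ δ := by
  by_contra! hfar
  -- no step of size at most `2δ` can jump over `[t - δ, t + δ]`
  have hbelow : ∀ m, A ≤ m → u m < t - δ := by
    intro m hm
    induction m, hm using Nat.le_induction with
    | base => linarith [abs_of_nonneg (sub_nonneg.mpr hAt) ▸ hfar A le_rfl]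
    | succ m hm ih =>
      have hstep := hgap m hm
      rcases lt_abs.mp (hfar (m + 1) (hm.trans m.le_succ)) with h | h <;> linarith
  obtain ⟨m, htm, hAm⟩ := ((hu.eventually_ge_atTop (t - δ)).and (eventually_ge_atTop A)).exists
  linarith [hbelow m hAm]

section AsymptoticallyArithmetic

variable {x : ℕ → ℝ} {s c K : ℝ}

theorem tendsto_atTop_of_abs_sub_div_le (hs : 0 < s)
    (hx : ∀ m : ℕ, 1 ≤ m → |x m - m / s - c| ≤ K / m) : Tendsto x atTop atTop := by
  have hlin : Tendsto (fun m : ℕ => (m : ℝ) / s + (c - |K|)) atTop atTop :=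
    (tendsto_natCast_atTop_atTop.atTop_div_const hs).atTop_add tendsto_const_nhds
  refine tendsto_atTop_mono' atTop ?_ hlin
  filter_upwards [eventually_ge_atTop 1] with m hm
  have hm' : (1 : ℝ) ≤ m := by exact_mod_cast hm
  have hKm : K / m ≤ |K| := div_le_of_le_mul₀ (by positivity) (abs_nonneg K)
    (by nlinarith [le_abs_self K, abs_nonneg K])
  linarith [(abs_le.mp (hx m hm)).1]

theorem eventually_sub_le_of_abs_sub_div_le (hx : ∀ m : ℕ, 1 ≤ m → |x m - m / s - c| ≤ K / m)
    {ε : ℝ} (hε : 0 < ε) : ∀ᶠ m in atTop, x (m + 1) - x m ≤ 1 / s + ε := by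
  have hsmall : ∀ᶠ m : ℕ in atTop, K / m ≤ ε / 2 :=
    (tendsto_const_div_atTop_nhds_zero_nat K).eventually (ge_mem_nhds (half_pos hε))
  filter_upwards [eventually_ge_atTop 1, hsmall, tendsto_add_atTop_nat 1 |>.eventually hsmall]
    with m hm hKm hKm'
  have hlow := (abs_le.mp (hx m hm)).1
  have hhigh := (abs_le.mp (hx (m + 1) (hm.trans m.le_succ))).2
  have hstep : ((m + 1 : ℕ) : ℝ) / s = m / s + 1 / s := by push_cast; ring
  linarith

end AsymptoticallyArithmetic

theorem close_elements_in_two_arithmetic_like_sequences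
    (a b c c' K : ℝ) (ha : 0 < a) (hab : a < b)
    (x y : ℕ → ℝ)
    (hx : ∀ m : ℕ, 1 ≤ m → |x m - (m : ℝ) / Real.sqrt b - c| ≤ K / (m : ℝ))
    (hy : ∀ n : ℕ, 1 ≤ n → |y n - (n : ℝ) / Real.sqrt a - c'| ≤ K / (n : ℝ))
    (ε : ℝ) (hε : 0 < ε) :
    ∃ A₀ : ℕ, ∀ A : ℕ, A₀ ≤ A →
      ∃ m n : ℕ, A ≤ m ∧ A ≤ n ∧ |y n - x m| ≤ 1 / (2 * Real.sqrt b) + ε := by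
  have hsb : 0 < Real.sqrt b := Real.sqrt_pos.mpr (ha.trans hab)
  have hgap : 1 / Real.sqrt b + 2 * ε = 2 * (1 / (2 * Real.sqrt b) + ε) := by
    field_simp
  obtain ⟨A₀, hA₀⟩ :=
    eventually_atTop.mp (eventually_sub_le_of_abs_sub_div_le hx (mul_pos two_pos hε))
  refine ⟨A₀, fun A hA => ?_⟩
  have hy_top := tendsto_atTop_of_abs_sub_div_le (Real.sqrt_pos.mpr ha) hy
  obtain ⟨n, hxy, hAn⟩ := ((hy_top.eventually_ge_atTop (x A)).and (eventually_ge_atTop A)).exists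
  obtain ⟨m, hAm, hclose⟩ := exists_abs_sub_le_of_sub_le_two_mul
    (tendsto_atTop_of_abs_sub_div_le hsb hx) hxy fun m hm => hgap ▸ hA₀ m (hA.trans hm)
  exact ⟨m, n, hAm, hAn, hclose⟩
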